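/- Let F be a number field with ring of integers O_F, K a quadratic extension of F, τ ∈ K ∖ F (so that K = F(τ)), and M := O_F + O_F·τ ⊆ K. Then the map sending A = (a b; c d) ∈ Γ_τ to cτ + d ∈ K^× is an injective group homomorphism from the stabilizer Γ_τ := {A ∈ SL₂(O_F) : (aτ + b)/(cτ + d) = τ} into K^×, and its image is exactly {u ∈ K^× : u·M = M and N_{K/F}(u) = 1}. -/

import Mathlib

open NumberField

/-- The natural ring homomorphism `O_F → K` obtained by composing `O_F → F → K`. -/
noncomputable def embFK (F K : Type*) [Field F] [NumberField F] [Field K] [Algebra F K] :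
    𝓞 F →+* K := (algebraMap F K).comp (algebraMap (𝓞 F) F)

/-- The Möbius action of a matrix `A ∈ SL₂(O_F)` on `τ ∈ K`:  `A·τ = (aτ + b)/(cτ + d)`. -/
noncomputable def moebiusK (F K : Type*) [Field F] [NumberField F] [Field K] [Algebra F K]
    (A : Matrix.SpecialLinearGroup (Fin 2) (𝓞 F)) (τ : K) : K :=
  (embFK F K ((A : Matrix (Fin 2) (Fin 2) (𝓞 F)) 0 0) * τ +
      embFK F K ((A : Matrix (Fin 2) (Fin 2) (𝓞 F)) 0 1)) /
    (embFK F K ((A : Matrix (Fin 2) (Fin 2) (𝓞 F)) 1 0) * τ +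
      embFK F K ((A : Matrix (Fin 2) (Fin 2) (𝓞 F)) 1 1))

/-- The stabilizer `Γ_τ` of `τ` in `SL₂(O_F)` under the Möbius action. -/
noncomputable def stabSet (F K : Type*) [Field F] [NumberField F] [Field K] [Algebra F K]
    (τ : K) : Set (Matrix.SpecialLinearGroup (Fin 2) (𝓞 F)) :=
  {A | moebiusK F K A τ = τ}

/-- The lattice `M = O_F·1 + O_F·τ ⊆ K`. -/
noncomputable def latticeSet (F K : Type*) [Field F] [NumberField F] [Field K] [Algebra F K]
    (τ : K) : Set K :=
  {x | ∃ a b : 𝓞 F, x = embFK F K a + embFK F K b * τ}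

/-- The map `A = (a b; c d) ↦ cτ + d`. -/
noncomputable def autFactor (F K : Type*) [Field F] [NumberField F] [Field K] [Algebra F K]
    (τ : K) (A : Matrix.SpecialLinearGroup (Fin 2) (𝓞 F)) : K :=
  embFK F K ((A : Matrix (Fin 2) (Fin 2) (𝓞 F)) 1 0) * τ +
    embFK F K ((A : Matrix (Fin 2) (Fin 2) (𝓞 F)) 1 1)

section Helpers

variable (F K : Type*) [Field F] [NumberField F] [Field K] [Algebra F K]

lemma indepF (τ : K) (hτ : τ ∉ Set.range (algebraMap F K)) (p q : F)
    (h : algebraMap F K p + algebraMap F K q * τ = 0) : p = 0 ∧ q = 0 := by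
  by_cases hq : q = 0
  · subst hq
    simp only [map_zero, zero_mul, add_zero] at h
    exact ⟨(algebraMap F K).injective (by simpa using h), rfl⟩
  · exfalso
    apply hτ
    refine ⟨-(p / q), ?_⟩
    have hq' : algebraMap F K q ≠ 0 := fun h0 => hq ((algebraMap F K).injective (by simpa using h0))
    rw [map_neg, map_div₀, neg_eq_iff_eq_neg, div_eq_iff hq']
    linear_combination h

lemma embFK_eq (x : 𝓞 F) : embFK F K x = algebraMap F K (algebraMap (𝓞 F) F x) := rfl

lemma indepO (τ : K) (hτ : τ ∉ Set.range (algebraMap F K)) (p q : 𝓞 F)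
    (h : embFK F K p + embFK F K q * τ = 0) : p = 0 ∧ q = 0 := by
  obtain ⟨h1, h2⟩ := indepF F K τ hτ _ _ h
  have inj := IsFractionRing.injective (𝓞 F) F
  exact ⟨inj (by simpa using h1), inj (by simpa using h2)⟩

lemma uniqO (τ : K) (hτ : τ ∉ Set.range (algebraMap F K)) (p q p' q' : 𝓞 F)
    (h : embFK F K p + embFK F K q * τ = embFK F K p' + embFK F K q' * τ) :
    p = p' ∧ q = q' := by
  obtain ⟨h1, h2⟩ := indepO F K τ hτ (p - p') (q - q') (by rw [map_sub, map_sub]; ring_nf; linear_combination h)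
  exact ⟨by linear_combination h1, by linear_combination h2⟩

end Helpers

section Norm
variable (F K : Type*) [Field F] [NumberField F] [Field K] [Algebra F K]

lemma norm_formula (hquad : Module.finrank F K = 2) (τ : K)
    (hτ : τ ∉ Set.range (algebraMap F K)) (u : K) (a b c d : 𝓞 F)
    (h1 : u = embFK F K d + embFK F K c * τ)
    (h2 : u * τ = embFK F K b + embFK F K a * τ) :
    Algebra.norm F u = algebraMap (𝓞 F) F (a * d - b * c) := by
  have li : LinearIndependent F ![(1 : K), τ] := by
    rw [LinearIndependent.pair_iff]
    intro s t hst
    exact indepF F K τ hτ s t (by rw [Algebra.smul_def, Algebra.smul_def] at hst; linear_combination hst)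
  have card : Fintype.card (Fin 2) = Module.finrank F K := by simp [hquad]
  have : FiniteDimensional F K := FiniteDimensional.of_finrank_eq_succ hquad
  set B := basisOfLinearIndependentOfCardEqFinrank li card with hB
  have hB0 : B 0 = 1 := by rw [hB]; simp [coe_basisOfLinearIndependentOfCardEqFinrank]
  have hB1 : B 1 = τ := by rw [hB]; simp [coe_basisOfLinearIndependentOfCardEqFinrank]
  have repr0 : ∀ x y : F, B.repr (x • B 0 + y • B 1) 0 = x := by
    intro x y; simp [Finsupp.single_apply]
  have repr1 : ∀ x y : F, B.repr (x • B 0 + y • B 1) 1 = y := by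
    intro x y; simp [Finsupp.single_apply]
  have e0 : u * B 0 = (algebraMap (𝓞 F) F d) • B 0 + (algebraMap (𝓞 F) F c) • B 1 := by
    rw [hB0, hB1, mul_one, Algebra.smul_def, Algebra.smul_def, mul_one, h1]; rfl
  have e1 : u * B 1 = (algebraMap (𝓞 F) F b) • B 0 + (algebraMap (𝓞 F) F a) • B 1 := by
    rw [hB0, hB1, Algebra.smul_def, Algebra.smul_def, mul_one, h2]; rfl
  rw [Algebra.norm_eq_matrix_det B, Matrix.det_fin_two]
  rw [Algebra.leftMulMatrix_eq_repr_mul, Algebra.leftMulMatrix_eq_repr_mul,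
    Algebra.leftMulMatrix_eq_repr_mul, Algebra.leftMulMatrix_eq_repr_mul,
    e0, e1, repr0, repr1, repr0, repr1]
  push_cast [map_sub, map_mul]
  ring

end Norm

section Stab
variable (F K : Type*) [Field F] [NumberField F] [Field K] [Algebra F K]

lemma autFactor_ne_zero (τ : K) (hτ : τ ∉ Set.range (algebraMap F K))
    (A : Matrix.SpecialLinearGroup (Fin 2) (𝓞 F)) : autFactor F K τ A ≠ 0 := by
  intro h
  unfold autFactor at h
  obtain ⟨hc, hd⟩ := indepO F K τ hτ ((A : Matrix (Fin 2) (Fin 2) (𝓞 F)) 1 1)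
    ((A : Matrix (Fin 2) (Fin 2) (𝓞 F)) 1 0) (by linear_combination h)
  have hdet := A.2
  rw [Matrix.det_fin_two, hc, hd] at hdet
  simp at hdet

lemma stab_iff (τ : K) (hτ : τ ∉ Set.range (algebraMap F K))
    (A : Matrix.SpecialLinearGroup (Fin 2) (𝓞 F)) :
    A ∈ stabSet F K τ ↔
      embFK F K ((A : Matrix (Fin 2) (Fin 2) (𝓞 F)) 0 0) * τ +
        embFK F K ((A : Matrix (Fin 2) (Fin 2) (𝓞 F)) 0 1) = τ * autFactor F K τ A := by
  have hne := autFactor_ne_zero F K τ hτ A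
  unfold stabSet moebiusK
  rw [Set.mem_setOf_eq, show (embFK F K ((A : Matrix (Fin 2) (Fin 2) (𝓞 F)) 1 0) * τ +
        embFK F K ((A : Matrix (Fin 2) (Fin 2) (𝓞 F)) 1 1)) = autFactor F K τ A from rfl,
    div_eq_iff hne]

end Stab

/-- for `K/F` quadratic, `τ ∈ K ∖ F` and `M = O_F + O_F·τ`, the map
`A = (a b; c d) ↦ cτ + d` is an injective group homomorphism from the stabilizer `Γ_τ`
of `τ` in `SL₂(O_F)` into `K^×`, with image
`{u ∈ K^× : u·M = M and N_{K/F}(u) = 1}`. -/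
theorem stmt6 (F K : Type*) [Field F] [NumberField F] [Field K] [Algebra F K]
    (hquad : Module.finrank F K = 2)
    (τ : K) (hτ : τ ∉ Set.range (algebraMap F K)) :
    (∀ A ∈ stabSet F K τ, ∀ B ∈ stabSet F K τ,
        autFactor F K τ (A * B) = autFactor F K τ A * autFactor F K τ B) ∧
    Set.InjOn (autFactor F K τ) (stabSet F K τ) ∧
    autFactor F K τ '' stabSet F K τ =
      {u : K | u ≠ 0 ∧ (fun x => u * x) '' latticeSet F K τ = latticeSet F K τ ∧
        Algebra.norm F u = 1} := by
  refine ⟨?_, ?_, ?_⟩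
  · intro A hA B hB
    rw [stab_iff F K τ hτ] at hB
    unfold autFactor at hB ⊢
    have hmul : ((A * B : Matrix.SpecialLinearGroup (Fin 2) (𝓞 F)) :
        Matrix (Fin 2) (Fin 2) (𝓞 F)) = (A : Matrix (Fin 2) (Fin 2) (𝓞 F)) * B := rfl
    rw [hmul, Matrix.mul_apply, Matrix.mul_apply, Fin.sum_univ_two, Fin.sum_univ_two,
      map_add, map_add, map_mul, map_mul, map_mul, map_mul]
    linear_combination embFK F K ((A : Matrix (Fin 2) (Fin 2) (𝓞 F)) 1 0) * hB
  · intro A hA B hB h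
    rw [stab_iff F K τ hτ] at hA hB
    unfold autFactor at h hA hB
    have hcd := uniqO F K τ hτ ((A : Matrix (Fin 2) (Fin 2) (𝓞 F)) 1 1)
      ((A : Matrix (Fin 2) (Fin 2) (𝓞 F)) 1 0) ((B : Matrix (Fin 2) (Fin 2) (𝓞 F)) 1 1)
      ((B : Matrix (Fin 2) (Fin 2) (𝓞 F)) 1 0) (by linear_combination h)
    have hab := uniqO F K τ hτ ((A : Matrix (Fin 2) (Fin 2) (𝓞 F)) 0 1)
      ((A : Matrix (Fin 2) (Fin 2) (𝓞 F)) 0 0) ((B : Matrix (Fin 2) (Fin 2) (𝓞 F)) 0 1)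
      ((B : Matrix (Fin 2) (Fin 2) (𝓞 F)) 0 0) (by linear_combination hA - hB + τ * h)
    refine Subtype.ext (Matrix.ext fun i j => ?_)
    fin_cases i <;> fin_cases j
    exacts [hab.2, hab.1, hcd.2, hcd.1]
  · ext u
    simp only [Set.mem_image, Set.mem_setOf_eq]
    constructor
    · rintro ⟨A, hA, rfl⟩
      rw [stab_iff F K τ hτ] at hA
      unfold autFactor at hA
      have hdet := A.2
      rw [Matrix.det_fin_two] at hdet
      have hdetK : embFK F K ((A : Matrix (Fin 2) (Fin 2) (𝓞 F)) 0 0) *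
          embFK F K ((A : Matrix (Fin 2) (Fin 2) (𝓞 F)) 1 1) -
          embFK F K ((A : Matrix (Fin 2) (Fin 2) (𝓞 F)) 0 1) *
          embFK F K ((A : Matrix (Fin 2) (Fin 2) (𝓞 F)) 1 0) = 1 := by
        rw [← map_mul, ← map_mul, ← map_sub, hdet, map_one]
      refine ⟨autFactor_ne_zero F K τ hτ A, ?_, ?_⟩
      · ext m
        simp only [Set.mem_image, latticeSet, Set.mem_setOf_eq]
        constructor
        · rintro ⟨x, ⟨p, q, rfl⟩, rfl⟩
          refine ⟨p * (A : Matrix (Fin 2) (Fin 2) (𝓞 F)) 1 1 +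
              q * (A : Matrix (Fin 2) (Fin 2) (𝓞 F)) 0 1,
            p * (A : Matrix (Fin 2) (Fin 2) (𝓞 F)) 1 0 +
              q * (A : Matrix (Fin 2) (Fin 2) (𝓞 F)) 0 0, ?_⟩
          unfold autFactor
          simp only [map_add, map_mul]
          linear_combination -(embFK F K q) * hA
        · rintro ⟨p, q, rfl⟩
          refine ⟨embFK F K ((A : Matrix (Fin 2) (Fin 2) (𝓞 F)) 0 0 * p -
              (A : Matrix (Fin 2) (Fin 2) (𝓞 F)) 0 1 * q) +
            embFK F K ((A : Matrix (Fin 2) (Fin 2) (𝓞 F)) 1 1 * q -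
              (A : Matrix (Fin 2) (Fin 2) (𝓞 F)) 1 0 * p) * τ, ⟨_, _, rfl⟩, ?_⟩
          unfold autFactor
          simp only [map_sub, map_mul]
          linear_combination -(embFK F K ((A : Matrix (Fin 2) (Fin 2) (𝓞 F)) 1 1) * embFK F K q -
              embFK F K ((A : Matrix (Fin 2) (Fin 2) (𝓞 F)) 1 0) * embFK F K p) * hA +
            (embFK F K p + embFK F K q * τ) * hdetK
      · refine (norm_formula F K hquad τ hτ _ ((A : Matrix (Fin 2) (Fin 2) (𝓞 F)) 0 0)
          ((A : Matrix (Fin 2) (Fin 2) (𝓞 F)) 0 1) ((A : Matrix (Fin 2) (Fin 2) (𝓞 F)) 1 0)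
          ((A : Matrix (Fin 2) (Fin 2) (𝓞 F)) 1 1) ?_ ?_).trans ?_
        · unfold autFactor; ring
        · unfold autFactor; linear_combination -hA
        · rw [hdet, map_one]
    · rintro ⟨hu0, hM, hnorm⟩
      have h1 : u ∈ latticeSet F K τ := by
        rw [← hM]
        exact ⟨embFK F K 1 + embFK F K 0 * τ, ⟨1, 0, rfl⟩, by simp⟩
      obtain ⟨d, c, hu⟩ := h1
      have h2 : u * τ ∈ latticeSet F K τ := by
        rw [← hM]
        exact ⟨embFK F K 0 + embFK F K 1 * τ, ⟨0, 1, rfl⟩, by simp⟩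
      obtain ⟨b, a, huτ⟩ := h2
      have hnf := norm_formula F K hquad τ hτ u a b c d hu huτ
      rw [hnorm] at hnf
      have hdet : a * d - b * c = 1 := by
        apply IsFractionRing.injective (𝓞 F) F
        rw [map_one, ← hnf]
      refine ⟨(⟨!![a, b; c, d], by rw [Matrix.det_fin_two_of]; exact hdet⟩ :
          Matrix.SpecialLinearGroup (Fin 2) (𝓞 F)), ?_, ?_⟩
      · refine (stab_iff F K τ hτ _).2 ?_
        show embFK F K a * τ + embFK F K b = τ * (embFK F K c * τ + embFK F K d)
        linear_combination -huτ + τ * hu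
      · show embFK F K c * τ + embFK F K d = u
        rw [hu]; ring
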